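/- arXiv:1510.05410 — 4 statements merged into one kernel-verified Lean document; each statement's English description precedes it below -/
import Mathlib

section
/- Let H be a graded Hecke algebra and, for w ∈ W with reduced expression w = s_{α_r} ⋯ s_{α_1}, define τ̃_w = (t_{s_{α_r}} α_r - k_{α_r}) ⋯ (t_{s_{α_1}} α_1 - k_{α_1}). Then for every v ∈ V, v · τ̃_w = τ̃_w · w^{-1}(v) in H. -/
/-!
Statement 12: For `w ∈ W` with a reduced expression `w = s_{α_r} ⋯ s_{α_1}`, the intertwining
element `τ̃_w = (t_{s_{α_r}} α_r - k_{α_r}) ⋯ (t_{s_{α_1}} α_1 - k_{α_1})` of the graded Hecke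
algebra satisfies `v · τ̃_w = τ̃_w · w⁻¹(v)` for all `v ∈ V`.

Setting: `H` is a `ℂ`-algebra containing `S(V)` via `f` and the group algebra of the Weyl
group `W` via `t : W → H` (multiplicative on the generators as used below); the Weyl group `W`
acts linearly on `V`; `s i` is the simple reflection attached to the simple root `root i` with
coroot `coroot i`; `k i` is the parameter, and the graded Hecke cross relation holds.
The word `l = [α_r, …, α_1]` is a reduced expression for `w`.
-/

noncomputable def tauTilde
    {ι : Type*} {V : Type*} [AddCommGroup V] [Module ℂ V]
    {H : Type*} [Ring H] [Algebra ℂ H]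
    (f : V →ₗ[ℂ] H) (t : ι → H) (root : ι → V) (k : ι → ℂ) (l : List ι) : H :=
  (l.map (fun i => t i * f (root i) - algebraMap ℂ H (k i))).prod

section Aux

variable
    {ι : Type*} {V : Type*} [AddCommGroup V] [Module ℂ V]
    {W : Type*} [Group W] (ρ : Representation ℂ W V)
    {H : Type*} [Ring H] [Algebra ℂ H]
    (f : V →ₗ[ℂ] H)
    (hcomm : ∀ v w : V, f v * f w = f w * f v)
    (t : ι → H) (s : ι → W) (root : ι → V) (coroot : ι → V →ₗ[ℂ] ℂ) (k : ι → ℂ)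
    (hs : ∀ i (v : V), ρ (s i) v = v - coroot i v • root i)
    (hrel : ∀ i (v : V),
      t i * f v - f (ρ (s i) v) * t i = algebraMap ℂ H (k i * coroot i v))

include hcomm hs hrel in
lemma stmt12_step (i : ι) (v : V) :
    f (ρ (s i) v) * (t i * f (root i) - algebraMap ℂ H (k i))
      = (t i * f (root i) - algebraMap ℂ H (k i)) * f v := by
  set T := t i with hT
  set A := f (root i) with hA
  set P := f v with hP
  set κ := algebraMap ℂ H (k i) with hκ
  set C := algebraMap ℂ H (coroot i v) with hC
  have hfs' : f (ρ (s i) v) = P - C * A := by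
    rw [hs i v, map_sub, map_smul, Algebra.smul_def]
  have h1 : T * P = (P - C * A) * T + κ * C := by
    have h := hrel i v
    rw [hfs', map_mul, ← hκ, ← hC] at h
    rw [sub_eq_iff_eq_add.mp h, add_comm]
  have central : ∀ x : H, κ * x = x * κ := fun x => Algebra.commutes _ _
  have hAP : A * P = P * A := hcomm (root i) v
  rw [hfs']
  symm
  calc (T * A - κ) * P = T * (A * P) - κ * P := by noncomm_ring
    _ = T * (P * A) - κ * P := by rw [hAP]
    _ = (T * P) * A - κ * P := by rw [mul_assoc]
    _ = ((P - C * A) * T + κ * C) * A - κ * P := by rw [h1]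
    _ = (P - C * A) * (T * A) + κ * (C * A) - κ * P := by noncomm_ring
    _ = (P - C * A) * (T * A) + (C * A) * κ - P * κ := by rw [central (C * A), central P]
    _ = (P - C * A) * (T * A - κ) := by noncomm_ring

include hcomm hs hrel in
lemma stmt12_step' (i : ι) (v : V) :
    f v * (t i * f (root i) - algebraMap ℂ H (k i))
      = (t i * f (root i) - algebraMap ℂ H (k i)) * f (ρ (s i)⁻¹ v) := by
  have := stmt12_step ρ f hcomm t s root coroot k hs hrel i (ρ (s i)⁻¹ v)
  have hv : ρ (s i) (ρ (s i)⁻¹ v) = v := by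
    have : ρ (s i) * ρ (s i)⁻¹ = 1 := by rw [← map_mul, mul_inv_cancel, map_one]
    calc ρ (s i) (ρ (s i)⁻¹ v) = (ρ (s i) * ρ (s i)⁻¹) v := rfl
      _ = v := by rw [this]; rfl
  rwa [hv] at this

include hcomm hs hrel in
lemma stmt12_aux (l : List ι) (v : V) :
    f v * tauTilde f t root k l
      = tauTilde f t root k l * f (ρ ((l.map s).prod)⁻¹ v) := by
  induction l generalizing v with
  | nil => simp [tauTilde]
  | cons i l ih =>
    have hτ : tauTilde f t root k (i :: l)
        = (t i * f (root i) - algebraMap ℂ H (k i)) * tauTilde f t root k l := by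
      simp [tauTilde]
    rw [hτ, ← mul_assoc, stmt12_step' ρ f hcomm t s root coroot k hs hrel i v,
      mul_assoc, ih (ρ (s i)⁻¹ v), ← mul_assoc]
    congr 2
    simp only [List.map_cons, List.prod_cons, mul_inv_rev, map_mul]
    rfl

end Aux

theorem stmt12
    (ι : Type*) (V : Type*) [AddCommGroup V] [Module ℂ V]
    (W : Type*) [Group W] (ρ : Representation ℂ W V)
    (H : Type*) [Ring H] [Algebra ℂ H]
    (f : V →ₗ[ℂ] H)
    (hcomm : ∀ v w : V, f v * f w = f w * f v)
    (t : ι → H) (s : ι → W) (root : ι → V) (coroot : ι → V →ₗ[ℂ] ℂ) (k : ι → ℂ)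
    -- the simple reflections act by the usual formula
    (hs : ∀ i (v : V), ρ (s i) v = v - coroot i v • root i)
    -- the graded Hecke algebra cross relation
    (hrel : ∀ i (v : V),
      t i * f v - f (ρ (s i) v) * t i = algebraMap ℂ H (k i * coroot i v))
    -- `l` is an expression for `w` ...
    (l : List ι) (w : W) (hw : (l.map s).prod = w)
    -- ... and it is reduced
    (hred : ∀ l' : List ι, (l'.map s).prod = w → l.length ≤ l'.length) :
    ∀ v : V,
      f v * tauTilde f t root k l = tauTilde f t root k l * f (ρ w⁻¹ v) := by
  intro v
  subst hw
  exact stmt12_aux ρ f hcomm t s root coroot k hs hrel l v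
end

section
/- Let U be a finite-dimensional indecomposable H_J-tempered module for a parabolic subalgebra H_J of a graded Hecke algebra H. Then any two simple composition factors U_1, U_2 of U satisfy ν(J, U_1) = ν(J, U_2), i.e., the Langlands parameter ν is constant across the composition factors of an indecomposable tempered module. -/
open scoped TensorProduct

/-!
The element `z = 1 ⊗ p` is central in `H_J`, so it acts on `U` by an `H_J`-linear endomorphism.
If `c` is an eigenvalue of `z` on `U`, Fitting's lemma for the indecomposable module `U` makes
`z - c` nilpotent on `U`, hence on every subquotient. On a simple subquotient the endomorphism
ring is a division ring by Schur's lemma, so there `z - c` acts by zero.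
-/

theorem Algebra.TensorProduct.one_tmul_mem_center {R B C : Type*} [CommSemiring R] [Semiring B]
    [Algebra R B] [CommSemiring C] [Algebra R C] (c : C) :
    (1 : B) ⊗ₜ[R] c ∈ Set.center (B ⊗[R] C) :=
  includeRight_map_center_le R B C ⟨c, by simp [Subalgebra.center_eq_top], rfl⟩

namespace Module.End

variable {A M : Type*} [Ring A] [AddCommGroup M] [Module A M]

theorem smulLeft_pow_apply {a : A} (ha : a ∈ Set.center A) (n : ℕ) (x : M) :
    (smulLeft a ha ^ n) x = a ^ n • x := by
  induction n generalizing x with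
  | zero => simp
  | succ n ih => rw [pow_succ, mul_apply, ih, smulLeft_apply, pow_succ, mul_smul]

theorem isNilpotent_smulLeft_iff {a : A} (ha : a ∈ Set.center A) :
    IsNilpotent (smulLeft (M := M) a ha) ↔ ∃ n : ℕ, a ^ n ∈ Module.annihilator A M := by
  simp only [IsNilpotent, LinearMap.ext_iff, smulLeft_pow_apply, Module.mem_annihilator,
    LinearMap.zero_apply]

theorem isNilpotent_of_not_injective [IsNoetherian A M] [IsArtinian A M]
    (hind : ∀ p q : Submodule A M, IsCompl p q → p = ⊥ ∨ p = ⊤) {f : End A M}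
    (hf : ¬ Function.Injective f) : IsNilpotent f := by
  obtain ⟨n, hcompl, hn⟩ :=
    (f.eventually_isCompl_ker_pow_range_pow.and (Filter.eventually_ne_atTop 0)).exists
  rcases hind _ _ hcompl with hbot | htop
  · exact absurd (injective_of_iterate_injective hn (LinearMap.ker_eq_bot.mp hbot)) hf
  · exact ⟨n, LinearMap.ker_eq_top.mp htop⟩

end Module.End

theorem IsSimpleModule.mem_annihilator_of_pow_mem {A M : Type*} [Ring A] [AddCommGroup M]
    [Module A M] [IsSimpleModule A M] {a : A} (ha : a ∈ Set.center A) {n : ℕ}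
    (hn : a ^ n ∈ Module.annihilator A M) : a ∈ Module.annihilator A M := by
  classical
  -- `End A M` is a division ring by Schur's lemma, so nilpotent endomorphisms vanish.
  have hnil : IsNilpotent (Module.End.smulLeft (M := M) a ha) :=
    (Module.End.isNilpotent_smulLeft_iff ha).mpr ⟨n, hn⟩
  exact Module.mem_annihilator.mpr fun x => LinearMap.congr_fun hnil.eq_zero x

theorem Submodule.annihilator_le_annihilator_quotient {A M : Type*} [Ring A] [AddCommGroup M]
    [Module A M] (q : Submodule A M) (r : Submodule A q) :
    Module.annihilator A M ≤ Module.annihilator A (q ⧸ r) :=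
  (q.subtype.annihilator_le_of_injective q.injective_subtype).trans
    (r.mkQ.annihilator_le_of_surjective r.mkQ_surjective)

theorem exists_pow_sub_algebraMap_mem_annihilator (K : Type*) {A U : Type*} [Field K]
    [IsAlgClosed K] [Ring A] [Algebra K A] [AddCommGroup U] [Module K U] [Module A U]
    [IsScalarTower K A U] [FiniteDimensional K U]
    (hind : ∀ p q : Submodule A U, IsCompl p q → p = ⊥ ∨ p = ⊤)
    {z : A} (hz : z ∈ Set.center A) :
    ∃ c : K, ∃ n : ℕ, (z - algebraMap K A c) ^ n ∈ Module.annihilator A U := by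
  cases subsingleton_or_nontrivial U
  · exact ⟨0, 0, Module.mem_annihilator.mpr fun _ => Subsingleton.elim _ _⟩
  obtain ⟨c, hc⟩ :=
    Module.End.exists_eigenvalue ((Module.End.smulLeft (M := U) z hz).restrictScalars K)
  obtain ⟨v, hv⟩ := hc.exists_hasEigenvector
  have hzc : z - algebraMap K A c ∈ Set.center A :=
    (Subring.center A).sub_mem hz (Set.algebraMap_mem_center c)
  have : IsNoetherian A U := isNoetherian_of_tower K inferInstance
  have : IsArtinian A U := isArtinian_of_tower K inferInstance
  refine ⟨c, (Module.End.isNilpotent_smulLeft_iff hzc).mp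
    (Module.End.isNilpotent_of_not_injective hind fun hinj => hv.2 (hinj ?_))⟩
  have hzv : z • v = c • v := Module.End.mem_eigenspace_iff.mp hv.1
  simp [sub_smul, hzv]

/- `ν(J, ·)` of a simple `H_J`-module is determined by the character through which the central
subalgebra `1 ⊗ S(V_J^⊥)` acts on it, so the conclusion is phrased through that action. -/
theorem stmt14
    (Hss : Type) [Ring Hss] [Algebra ℂ Hss]
    (σ : Type)
    (HJ : Type) [Ring HJ] [Algebra ℂ HJ]
    -- `H_J ≅ H_J^{ss} ⊗ S(V_J^⊥)`
    (e : HJ ≃ₐ[ℂ] Hss ⊗[ℂ] MvPolynomial σ ℂ)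
    (U : Type) [AddCommGroup U] [Module ℂ U]
    [Module HJ U] [IsScalarTower ℂ HJ U] [FiniteDimensional ℂ U]
    -- `U` is indecomposable
    (hind : ∀ p q : Submodule HJ U, IsCompl p q → p = ⊥ ∨ p = ⊤) :
    ∀ p : MvPolynomial σ ℂ, ∃ c : ℂ,
      ∀ (q : Submodule HJ U) (r : Submodule HJ q),
        IsSimpleModule HJ (q ⧸ r) →
        ∀ x : q ⧸ r,
          (e.symm ((1 : Hss) ⊗ₜ[ℂ] p)) • x = (algebraMap ℂ HJ c) • x := by
  intro p
  have hz : e.symm ((1 : Hss) ⊗ₜ[ℂ] p) ∈ Set.center HJ :=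
    MulEquivClass.apply_mem_center e.symm (Algebra.TensorProduct.one_tmul_mem_center p)
  obtain ⟨c, n, hn⟩ := exists_pow_sub_algebraMap_mem_annihilator ℂ hind hz
  refine ⟨c, fun q r _ x => ?_⟩
  have hzc := (Subring.center HJ).sub_mem hz (Set.algebraMap_mem_center c)
  have hann := IsSimpleModule.mem_annihilator_of_pow_mem hzc
    (q.annihilator_le_annihilator_quotient r hn)
  rw [← sub_eq_zero, ← sub_smul]
  exact Module.mem_annihilator.mp hann x
end

section
/- Let (J, U) ∈ Ξ_L^g (U finite-dimensional indecomposable H_J-tempered). Then the induced module I(J, U) = H ⊗_{H_J} U is an indecomposable H-module. -/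
/-!
Indecomposability means that the only idempotent endomorphisms are `0` and `1`. An idempotent
`H`-endomorphism `e` of `I(J,U)` is in particular `H_J`-linear; since `Res I(J,U) = U ⊕ Y` and
there are no nonzero `H_J`-maps `U → Y`, it preserves `U`, where it restricts to an idempotent,
hence to `0` or `1` by indecomposability of `U`. As `U` generates `I(J,U)` over `H`, `e` is then
`0` or `1` itself.
-/

section Indecomposable

variable {R M : Type*} [Ring R] [AddCommGroup M] [Module R M]

theorem forall_isCompl_imp_iff_forall_isIdempotentElem :
    (∀ p q : Submodule R M, IsCompl p q → p = ⊥ ∨ p = ⊤) ↔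
      ∀ f : Module.End R M, IsIdempotentElem f → f = 0 ∨ f = 1 := by
  constructor
  · intro hM f hf
    have hproj := LinearMap.IsIdempotentElem.isProj_range f hf
    exact (hM _ _ hproj.isCompl).imp hproj.submodule_eq_bot_iff.mp hproj.submodule_eq_top_iff.mp
  · intro hM p q hpq
    rw [← Submodule.range_projection hpq]
    rcases hM _ (Submodule.isIdempotentElem_projection hpq) with h | h <;> rw [h]
    · exact .inl LinearMap.range_zero
    · exact .inr LinearMap.range_id

theorem Submodule.mapsTo_of_isCompl_of_forall_eq_zero {P Y : Submodule R M} (hPY : IsCompl P Y)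
    (hhom : ∀ g : P →ₗ[R] Y, g = 0) (f : Module.End R M) : Set.MapsTo f P P := fun x hx =>
  (Submodule.projectionOnto_apply_eq_zero_iff hPY.symm).mp
    (LinearMap.congr_fun (hhom (Y.projectionOnto P hPY.symm ∘ₗ f ∘ₗ P.subtype)) ⟨x, hx⟩)

theorem LinearMap.IsIdempotentElem.restrict {f : Module.End R M} (hf : IsIdempotentElem f)
    {P : Submodule R M} (hP : Set.MapsTo f P P) : IsIdempotentElem (f.restrict hP) :=
  LinearMap.ext fun x => Subtype.ext (LinearMap.congr_fun hf x)

end Indecomposable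

def LinearMap.restrictScalarsOfSMulEq {S H M N : Type*} [Ring S] [Ring H]
    [AddCommGroup M] [AddCommGroup N] [Module H M] [Module S M] [Module H N] [Module S N]
    (φ : S → H) (hM : ∀ (s : S) (x : M), s • x = φ s • x) (hN : ∀ (s : S) (x : N), s • x = φ s • x)
    (f : M →ₗ[H] N) : M →ₗ[S] N where
  toFun := f
  map_add' := f.map_add
  map_smul' s x := by rw [hM, hN, f.map_smul]; rfl

theorem stmt17_general
    (H : Type) [Ring H] [Algebra ℂ H]
    (S : Type) [Ring S] [Algebra ℂ S]
    (φ : S →ₐ[ℂ] H)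
    (I : Type) [AddCommGroup I] [Module H I] [Module S I]
    -- the `S`-action on `I` is the restriction along `φ` of the `H`-action
    (hres : ∀ (s : S) (x : I), s • x = φ s • x)
    -- `P` is the canonical copy `1 ⊗ U` of `U` inside `I(J,U)`
    (P : Submodule S I)
    -- `U` is indecomposable
    (hindec : ∀ p q : Submodule S P, IsCompl p q → p = ⊥ ∨ p = ⊤)
    -- `I(J,U)` is generated by `1 ⊗ U`
    (hgen : Submodule.span H (P : Set I) = ⊤)
    -- consequence of temperedness: `Res_S I(J,U) = P ⊕ Y` with disjoint central characters
    (Y : Submodule S I) (hcompl : IsCompl P Y)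
    (hPY : ∀ g : P →ₗ[S] Y, g = 0) :
    ∀ p q : Submodule H I, IsCompl p q → p = ⊥ ∨ p = ⊤ := by
  refine forall_isCompl_imp_iff_forall_isIdempotentElem.mpr fun e he => ?_
  let eS := e.restrictScalarsOfSMulEq φ hres hres
  have heS : IsIdempotentElem eS := LinearMap.ext fun x => LinearMap.congr_fun he x
  have hP := P.mapsTo_of_isCompl_of_forall_eq_zero hcompl hPY eS
  have hPe := forall_isCompl_imp_iff_forall_isIdempotentElem.mp hindec _
    (LinearMap.IsIdempotentElem.restrict heS hP)
  refine hPe.imp (fun h0 => LinearMap.ext_on hgen fun x hx => ?_)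
    (fun h1 => LinearMap.ext_on hgen fun x hx => ?_)
  · exact congr_arg Subtype.val (LinearMap.congr_fun h0 ⟨x, hx⟩)
  · exact congr_arg Subtype.val (LinearMap.congr_fun h1 ⟨x, hx⟩)

theorem stmt17
    (H : Type) [Ring H] [Algebra ℂ H]
    (S : Type) [Ring S] [Algebra ℂ S]
    (φ : S →ₐ[ℂ] H) (hφ : Function.Injective φ)
    (I : Type) [AddCommGroup I] [Module ℂ I] [Module H I] [Module S I]
    [FiniteDimensional ℂ I]
    -- the `S`-action on `I` is the restriction along `φ` of the `H`-action
    (hres : ∀ (s : S) (x : I), s • x = φ s • x)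
    -- `P` is the canonical copy `1 ⊗ U` of `U` inside `I(J,U)`
    (P : Submodule S I)
    -- `U` is indecomposable
    (hindec : ∀ p q : Submodule S P, IsCompl p q → p = ⊥ ∨ p = ⊤)
    -- `I(J,U)` is generated by `1 ⊗ U`
    (hgen : Submodule.span H (P : Set I) = ⊤)
    -- Frobenius reciprocity: `Hom_H(I(J,U), M) ≅ Hom_S(U, Res M)`
    (hfrob : ∀ (M : Type) [AddCommGroup M] [Module H M] [Module S M],
      (∀ (s : S) (x : M), s • x = φ s • x) →
      ∀ f : P →ₗ[S] M, ∃! F : I →ₗ[H] M, ∀ x : P, F x = f x)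
    -- consequence of temperedness: `Res_S I(J,U) = P ⊕ Y` with disjoint central characters
    (Y : Submodule S I) (hcompl : IsCompl P Y)
    (hPY : ∀ g : P →ₗ[S] Y, g = 0)
    (hYP : ∀ g : Y →ₗ[S] P, g = 0) :
    ∀ p q : Submodule H I, IsCompl p q → p = ⊥ ∨ p = ⊤ :=
  stmt17_general H S φ I hres P hindec hgen Y hcompl hPY
end

section
/- Let H be the graded Hecke algebra of type A_1 with parameter k = 1, simple root α. Let U' be the 2-dimensional indecomposable S(V)-module with both weights equal to 0 (the regular representation of ℂ[x]/(x^2)). Then the induced module H ⊗_{S(V)} U' is semisimple of length 2; in particular, induction of a non-tempered indecomposable module need not be indecomposable. -/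
/-!
Statement 19 (Remark 3.9 of the paper): Let `H` be the graded Hecke algebra of type `A₁` with
parameter `k = 1`: it is generated over `ℂ` by `T = t_s` and `a = α` subject to `T² = 1` and
the cross relation `T·a + a·T = 2` (i.e. `T a - s(a) T = k⟨α, α∨⟩ = 2` with `s(a) = -a`).
Let `U' = ℂ[a]/(a²)` be the 2-dimensional indecomposable `S(V)`-module with both weights `0`.
Then `M = H ⊗_{S(V)} U'` is semisimple of length 2, i.e. a direct sum of two simple
`H`-submodules.

The induced module `M` is characterized as follows: it is 4-dimensional over `ℂ`, cyclic over
`H` with generator `m₀ = 1 ⊗ 1`, and `a² • m₀ = 0` (while no smaller relation holds, which is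
forced by `dim M = 4`).
-/

def stmt19SubH {H : Type} [Ring H] [Algebra ℂ H] {M : Type} [AddCommGroup M] [Module ℂ M]
    [Module H M] [IsScalarTower ℂ H M] (T a : H)
    (hgen : Algebra.adjoin ℂ ({T, a} : Set H) = ⊤)
    (W : Submodule ℂ M)
    (hTW : ∀ w ∈ W, T • w ∈ W) (haW : ∀ w ∈ W, a • w ∈ W) : Submodule H M where
  carrier := W
  add_mem' := W.add_mem
  zero_mem' := W.zero_mem
  smul_mem' := by
    have key : ∀ h ∈ Algebra.adjoin ℂ ({T, a} : Set H), ∀ w ∈ W, h • w ∈ W := by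
      intro h hh
      induction hh using Algebra.adjoin_induction with
      | mem x hx => rcases hx with rfl | rfl
                    · exact hTW
                    · exact haW
      | algebraMap r => intro w hw; rw [algebraMap_smul]; exact W.smul_mem r hw
      | add x y hx hy ihx ihy => intro w hw; rw [add_smul]; exact W.add_mem (ihx w hw) (ihy w hw)
      | mul x y hx hy ihx ihy => intro w hw; rw [mul_smul]; exact ihx _ (ihy w hw)
    intro h w hw
    exact key h (by rw [hgen]; trivial) w hw

theorem stmt19
    (H : Type) [Ring H] [Algebra ℂ H]
    (T a : H)
    -- defining relations of the graded Hecke algebra of type A₁, k = 1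
    (hT : T * T = 1)
    (hrel : T * a + a * T = algebraMap ℂ H 2)
    (hgen : Algebra.adjoin ℂ ({T, a} : Set H) = ⊤)
    -- the induced module M = H ⊗_{S(V)} (ℂ[a]/(a²))
    (M : Type) [AddCommGroup M] [Module ℂ M] [Module H M] [IsScalarTower ℂ H M]
    (m₀ : M)
    (hcyc : Submodule.span H ({m₀} : Set M) = ⊤)
    (hsq : a • a • m₀ = 0)
    (hdim : Module.finrank ℂ M = 4) :
    IsSemisimpleModule H M ∧
      ∃ p q : Submodule H M,
        IsCompl p q ∧ IsSimpleModule H p ∧ IsSimpleModule H q := by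
  -- scalars commute
  have hcomm : ∀ (c : ℂ) (h : H) (x : M), h • c • x = c • h • x := by
    intro c h x
    rw [← algebraMap_smul H c x, ← mul_smul, ← Algebra.commutes, mul_smul, algebraMap_smul]
  have hCmem : ∀ (N : Submodule H M) (c : ℂ) (x : M), x ∈ N → c • x ∈ N := by
    intro N c x hx
    rw [← algebraMap_smul H c x]
    exact N.smul_mem _ hx
  -- basic action identities
  have hTT : ∀ x : M, T • T • x = x := fun x => by rw [← mul_smul, hT, one_smul]
  have hcr : ∀ x : M, a • T • x = (2 : ℂ) • x - T • a • x := by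
    intro x
    have h1 : (T * a + a * T) • x = algebraMap ℂ H (2 : ℂ) • x := by rw [hrel]
    rw [add_smul, mul_smul, mul_smul, algebraMap_smul] at h1
    rw [← h1]
    abel
  -- the four basis vectors, as opaque elements
  obtain ⟨e2, he2⟩ : ∃ x : M, x = T • m₀ := ⟨_, rfl⟩
  obtain ⟨e3, he3⟩ : ∃ x : M, x = a • m₀ := ⟨_, rfl⟩
  obtain ⟨e4, he4⟩ : ∃ x : M, x = T • e3 := ⟨_, rfl⟩
  obtain ⟨f1, hf1⟩ : ∃ x : M, x = m₀ + e2 := ⟨_, rfl⟩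
  obtain ⟨f2, hf2⟩ : ∃ x : M, x = (2 : ℂ) • m₀ + e3 - e4 := ⟨_, rfl⟩
  -- action table
  have hTe1 : T • m₀ = e2 := he2.symm
  have hae1 : a • m₀ = e3 := he3.symm
  have hTe2 : T • e2 = m₀ := by rw [he2, hTT]
  have hTe3 : T • e3 = e4 := he4.symm
  have hTe4 : T • e4 = e3 := by rw [he4, hTT]
  have hae2 : a • e2 = (2 : ℂ) • m₀ - e4 := by rw [he2, hcr, hae1, hTe3]
  have hae3 : a • e3 = 0 := by rw [he3]; exact hsq
  have hae4 : a • e4 = (2 : ℂ) • e3 := by rw [he4, hcr, hae3, smul_zero, sub_zero]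
  have hTf1 : T • f1 = f1 := by rw [hf1, smul_add, hTe1, hTe2, add_comm]
  have haf1 : a • f1 = f2 := by rw [hf1, smul_add, hae1, hae2, hf2]; abel
  have hTf2 : T • f2 = (2 : ℂ) • f1 - f2 := by
    rw [hf2, smul_sub, smul_add, hcomm, hTe1, hTe3, hTe4, hf1]
    module
  have haf2 : a • f2 = 0 := by
    rw [hf2, smul_sub, smul_add, hcomm, hae1, hae3, hae4]
    module
  -- stability of spans under the action of a single element
  have hstab : ∀ (h : H) (s : Set M), (∀ x ∈ s, h • x ∈ Submodule.span ℂ s) →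
      ∀ w ∈ Submodule.span ℂ s, h • w ∈ Submodule.span ℂ s := by
    intro h s hs w hw
    let L : M →ₗ[ℂ] M :=
      { toFun := fun x => h • x
        map_add' := fun x y => smul_add h x y
        map_smul' := fun c x => hcomm c h x }
    have hle : Submodule.span ℂ s ≤ (Submodule.span ℂ s).comap L :=
      Submodule.span_le.mpr fun x hx => hs x hx
    exact hle hw
  -- the big span
  have hb4 : (Set.range ![m₀, e2, e3, e4] : Set M) = {m₀, e2, e3, e4} := by
    ext x
    constructor
    · rintro ⟨i, rfl⟩
      fin_cases i <;> simp
    · rintro (rfl | rfl | rfl | rfl)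
      exacts [⟨0, rfl⟩, ⟨1, rfl⟩, ⟨2, rfl⟩, ⟨3, rfl⟩]
  obtain ⟨W, hW⟩ : ∃ W : Submodule ℂ M, W = Submodule.span ℂ ({m₀, e2, e3, e4} : Set M) :=
    ⟨_, rfl⟩
  have hm1 : m₀ ∈ W := hW ▸ Submodule.subset_span (by simp)
  have hm2 : e2 ∈ W := hW ▸ Submodule.subset_span (by simp)
  have hm3 : e3 ∈ W := hW ▸ Submodule.subset_span (by simp)
  have hm4 : e4 ∈ W := hW ▸ Submodule.subset_span (by simp)
  have hTW : ∀ w ∈ W, T • w ∈ W := by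
    rw [hW]
    apply hstab
    intro x hx
    rcases hx with rfl | rfl | rfl | rfl
    · rw [hTe1]; exact hW ▸ hm2
    · rw [hTe2]; exact hW ▸ hm1
    · rw [hTe3]; exact hW ▸ hm4
    · rw [hTe4]; exact hW ▸ hm3
  have haW : ∀ w ∈ W, a • w ∈ W := by
    rw [hW]
    apply hstab
    intro x hx
    rcases hx with rfl | rfl | rfl | rfl
    · rw [hae1]; exact hW ▸ hm3
    · rw [hae2]; exact Submodule.sub_mem _ (Submodule.smul_mem _ _ (hW ▸ hm1)) (hW ▸ hm4)
    · rw [hae3]; exact Submodule.zero_mem _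
    · rw [hae4]; exact Submodule.smul_mem _ _ (hW ▸ hm3)
  -- W is all of M
  have hWall : ∀ m : M, m ∈ W := by
    intro m
    have h1 : Submodule.span H ({m₀} : Set M) ≤ stmt19SubH T a hgen W hTW haW :=
      Submodule.span_le.mpr (by intro x hx; rcases hx with rfl; exact hm1)
    exact h1 (hcyc.ge Submodule.mem_top)
  -- linear independence of the four vectors
  have hspan : ⊤ ≤ Submodule.span ℂ (Set.range ![m₀, e2, e3, e4]) := by
    rw [hb4, ← hW]
    exact fun m _ => hWall m
  have hind : LinearIndependent ℂ ![m₀, e2, e3, e4] :=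
    linearIndependent_of_top_le_span_of_card_eq_finrank hspan (by rw [hdim]; rfl)
  have hcoef : ∀ c1 c2 c3 c4 : ℂ, c1 • m₀ + c2 • e2 + c3 • e3 + c4 • e4 = 0 →
      c1 = 0 ∧ c2 = 0 ∧ c3 = 0 ∧ c4 = 0 := by
    intro c1 c2 c3 c4 hc
    have h0 := Fintype.linearIndependent_iff.mp hind ![c1, c2, c3, c4] ?_
    · exact ⟨h0 0, h0 1, h0 2, h0 3⟩
    · rw [Fin.sum_univ_four]
      simpa using hc
  -- nonvanishing
  have hf1ne : f1 ≠ 0 := by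
    intro h
    have h0 : (1:ℂ) • m₀ + (1:ℂ) • e2 + (0:ℂ) • e3 + (0:ℂ) • e4 = 0 := by
      rw [one_smul, one_smul, zero_smul, zero_smul, add_zero, add_zero, ← hf1]; exact h
    exact one_ne_zero (hcoef 1 1 0 0 h0).1
  have he3ne : e3 ≠ 0 := by
    intro h
    have h0 : (0:ℂ) • m₀ + (0:ℂ) • e2 + (1:ℂ) • e3 + (0:ℂ) • e4 = 0 := by
      rw [one_smul, zero_smul, zero_smul, zero_smul, zero_add, zero_add, add_zero]; exact h
    exact one_ne_zero (hcoef 0 0 1 0 h0).2.2.1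
  -- the submodule p
  have hTWp : ∀ w ∈ Submodule.span ℂ ({f1, f2} : Set M),
      T • w ∈ Submodule.span ℂ ({f1, f2} : Set M) := by
    apply hstab
    intro x hx
    rcases hx with rfl | rfl
    · rw [hTf1]; exact Submodule.subset_span (by simp)
    · rw [hTf2]
      exact Submodule.sub_mem _ (Submodule.smul_mem _ _ (Submodule.subset_span (by simp)))
        (Submodule.subset_span (by simp))
  have haWp : ∀ w ∈ Submodule.span ℂ ({f1, f2} : Set M),
      a • w ∈ Submodule.span ℂ ({f1, f2} : Set M) := by
    apply hstab
    intro x hx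
    rcases hx with rfl | rfl
    · rw [haf1]; exact Submodule.subset_span (by simp)
    · rw [haf2]; exact Submodule.zero_mem _
  -- the submodule q
  have hTWq : ∀ w ∈ Submodule.span ℂ ({e3, e4} : Set M),
      T • w ∈ Submodule.span ℂ ({e3, e4} : Set M) := by
    apply hstab
    intro x hx
    rcases hx with rfl | rfl
    · rw [hTe3]; exact Submodule.subset_span (by simp)
    · rw [hTe4]; exact Submodule.subset_span (by simp)
  have haWq : ∀ w ∈ Submodule.span ℂ ({e3, e4} : Set M),
      a • w ∈ Submodule.span ℂ ({e3, e4} : Set M) := by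
    apply hstab
    intro x hx
    rcases hx with rfl | rfl
    · rw [hae3]; exact Submodule.zero_mem _
    · rw [hae4]; exact Submodule.smul_mem _ _ (Submodule.subset_span (by simp))
  set p : Submodule H M := stmt19SubH T a hgen _ hTWp haWp with hpdef
  set q : Submodule H M := stmt19SubH T a hgen _ hTWq haWq with hqdef
  have hmemp : ∀ x : M, x ∈ p ↔ ∃ c d : ℂ, c • f1 + d • f2 = x := by
    intro x
    show x ∈ Submodule.span ℂ ({f1, f2} : Set M) ↔ _
    exact Submodule.mem_span_pair
  have hmemq : ∀ x : M, x ∈ q ↔ ∃ c d : ℂ, c • e3 + d • e4 = x := by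
    intro x
    show x ∈ Submodule.span ℂ ({e3, e4} : Set M) ↔ _
    exact Submodule.mem_span_pair
  -- p is simple
  have hple : ∀ N : Submodule H M, f1 ∈ N → f2 ∈ N → p ≤ N := by
    intro N h1 h2 x hx
    obtain ⟨c, d, rfl⟩ := (hmemp x).mp hx
    exact N.add_mem (hCmem N c f1 h1) (hCmem N d f2 h2)
  have hInv : ∀ (N : Submodule H M) (c : ℂ) (x : M), c ≠ 0 → c • x ∈ N → x ∈ N := by
    intro N c x hc hcx
    have h' := hCmem N c⁻¹ _ hcx
    rwa [smul_smul, inv_mul_cancel₀ hc, one_smul] at h'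
  have hpatom : IsAtom p := by
    constructor
    · intro hbot
      have hf1p : f1 ∈ p := (hmemp f1).mpr ⟨1, 0, by simp⟩
      rw [hbot, Submodule.mem_bot] at hf1p
      exact hf1ne hf1p
    · intro N hN
      by_contra hne
      obtain ⟨x, hxN, hx0⟩ := (Submodule.ne_bot_iff N).mp hne
      obtain ⟨c, d, hx⟩ := (hmemp x).mp (hN.le hxN)
      have hf2N : f2 ∈ N := by
        by_cases hc : c = 0
        · have hd : d ≠ 0 := by
            rintro rfl
            exact hx0 (by rw [← hx, hc, zero_smul, zero_smul, add_zero])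
          rw [← hx, hc, zero_smul, zero_add] at hxN
          exact hInv N d f2 hd hxN
        · have hax : a • x ∈ N := N.smul_mem a hxN
          have hax2 : a • x = c • f2 := by
            rw [← hx, smul_add, hcomm, hcomm, haf1, haf2, smul_zero, add_zero]
          rw [hax2] at hax
          exact hInv N c f2 hc hax
      have hf1N : f1 ∈ N := by
        have h2 : T • f2 + f2 ∈ N := N.add_mem (N.smul_mem T hf2N) hf2N
        have he : T • f2 + f2 = (2:ℂ) • f1 := by rw [hTf2]; abel
        rw [he] at h2
        exact hInv N (2:ℂ) f1 two_ne_zero h2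
      exact hN.ne (le_antisymm hN.le (hple N hf1N hf2N))
  -- q is simple
  have hqle : ∀ N : Submodule H M, e3 ∈ N → e4 ∈ N → q ≤ N := by
    intro N h1 h2 x hx
    obtain ⟨c, d, rfl⟩ := (hmemq x).mp hx
    exact N.add_mem (hCmem N c e3 h1) (hCmem N d e4 h2)
  have hqatom : IsAtom q := by
    constructor
    · intro hbot
      have he3q : e3 ∈ q := (hmemq e3).mpr ⟨1, 0, by simp⟩
      rw [hbot, Submodule.mem_bot] at he3q
      exact he3ne he3q
    · intro N hN
      by_contra hne
      obtain ⟨x, hxN, hx0⟩ := (Submodule.ne_bot_iff N).mp hne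
      obtain ⟨u, v, hx⟩ := (hmemq x).mp (hN.le hxN)
      have he3N : e3 ∈ N := by
        by_cases hv : v = 0
        · have hu : u ≠ 0 := by
            rintro rfl
            exact hx0 (by rw [← hx, hv, zero_smul, zero_smul, add_zero])
          rw [← hx, hv, zero_smul, add_zero] at hxN
          exact hInv N u e3 hu hxN
        · have hax : a • x ∈ N := N.smul_mem a hxN
          have hax2 : a • x = (v * 2) • e3 := by
            rw [← hx, smul_add, hcomm, hcomm, hae3, hae4, smul_zero, zero_add, smul_smul]
          rw [hax2] at hax
          exact hInv N (v * 2) e3 (mul_ne_zero hv two_ne_zero) hax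
      have he4N : e4 ∈ N := by
        have := N.smul_mem T he3N
        rwa [hTe3] at this
      exact hN.ne (le_antisymm hN.le (hqle N he3N he4N))
  have hpsimple : IsSimpleModule H p := isSimpleModule_iff_isAtom.mpr hpatom
  have hqsimple : IsSimpleModule H q := isSimpleModule_iff_isAtom.mpr hqatom
  -- p and q are complementary
  have hdis : Disjoint p q := by
    rw [Submodule.disjoint_def]
    intro x hxp hxq
    obtain ⟨c, d, hx1⟩ := (hmemp x).mp hxp
    obtain ⟨u, v, hx2⟩ := (hmemq x).mp hxq
    have key : (c + 2*d) • m₀ + c • e2 + (d - u) • e3 + (-d - v) • e4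
        = (c • f1 + d • f2) - (u • e3 + v • e4) := by
      rw [hf1, hf2]; module
    rw [hx1, hx2, sub_self] at key
    obtain ⟨k1, k2, k3, k4⟩ := hcoef _ _ _ _ key
    have hd : d = 0 := by
      rw [k2, zero_add] at k1
      rcases mul_eq_zero.mp k1 with h | h
      · exact absurd h two_ne_zero
      · exact h
    rw [← hx1, k2, hd, zero_smul, zero_smul, add_zero]
  have hcod : Codisjoint p q := by
    rw [codisjoint_iff]
    refine le_antisymm le_top ?_
    rw [← hcyc]
    apply Submodule.span_le.mpr
    intro x hx
    rcases hx with rfl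
    have h1 : f2 ∈ p ⊔ q := Submodule.mem_sup_left ((hmemp f2).mpr ⟨0, 1, by simp⟩)
    have h3 : e3 ∈ p ⊔ q := Submodule.mem_sup_right ((hmemq e3).mpr ⟨1, 0, by simp⟩)
    have h4 : e4 ∈ p ⊔ q := Submodule.mem_sup_right ((hmemq e4).mpr ⟨0, 1, by simp⟩)
    have hm : x = (2⁻¹:ℂ) • f2 - (2⁻¹:ℂ) • e3 + (2⁻¹:ℂ) • e4 := by
      rw [hf2]; module
    rw [hm]
    exact Submodule.add_mem _
      (Submodule.sub_mem _ (hCmem _ _ _ h1) (hCmem _ _ _ h3)) (hCmem _ _ _ h4)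
  have hcompl : IsCompl p q := ⟨hdis, hcod⟩
  have hss : IsSemisimpleModule H M := by
    apply IsSemisimpleModule.of_sSup_simples_eq_top
    apply le_antisymm le_top
    calc (⊤ : Submodule H M) = p ⊔ q := (codisjoint_iff.mp hcod).symm
      _ ≤ sSup {m : Submodule H M | IsSimpleModule H m} :=
          sup_le (le_sSup hpsimple) (le_sSup hqsimple)
  exact ⟨hss, p, q, hcompl, hpsimple, hqsimple⟩
end
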